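/- Let φ be a faithful state on ℝ⟨x₁,…,xₙ⟩ with orthogonal monic polynomial family {P_u} satisfying the recursion x_i P_u = P_{(i,u)} + Σ_{|w|=|u|} B_{i,w,u} P_w + Σ_{|v|=|u|-1} C_{i,v,u} P_v with C_{i,v,u} = δ_{u,(i,v)} C_{i,v,(i,v)}. Then the squared norm satisfies V_{uu} := φ(P_u* P_u) = ∏_{j=1}^{k} C_{u(j), u_{j+1}, u_j}, where u_j = (u(j),…,u(k)) denotes the suffix of u starting at position j. -/

import Mathlib

/-- The monomial `x_{u(1)} ⋯ x_{u(k)}` in the free algebra `ℝ⟨x₁,…,xₙ⟩`. -/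
noncomputable def mono {n : ℕ} (u : List (Fin n)) : FreeAlgebra ℝ (Fin n) :=
  (u.map (FreeAlgebra.ι ℝ)).prod

/-- The span of monomials of length (degree) `< k`: "lower-order terms". -/
noncomputable def lowerOrder (n k : ℕ) : Submodule ℝ (FreeAlgebra ℝ (Fin n)) :=
  Submodule.span ℝ {m | ∃ v : List (Fin n), v.length < k ∧ m = mono v}

/-- The monomial-reversing involution `*` on `ℝ⟨x₁,…,xₙ⟩`. -/
noncomputable def ncStar {n : ℕ} (P : FreeAlgebra ℝ (Fin n)) : FreeAlgebra ℝ (Fin n) :=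
  MulOpposite.unop
    (FreeAlgebra.lift ℝ (fun i => MulOpposite.op (FreeAlgebra.ι ℝ i)) P)

/-- A monic polynomial family: `P_∅ = 1` and `P_u = x_u + lower-order terms`. -/
def IsMonicFamily {n : ℕ} (P : List (Fin n) → FreeAlgebra ℝ (Fin n)) : Prop :=
  P [] = 1 ∧ ∀ u : List (Fin n), P u - mono u ∈ lowerOrder n u.length

/-- `∏_{j=1}^{k} C_{u(j), u_{j+1}, u_j}` over the suffixes `u_j = (u(j),…,u(k))` of `u`. -/
def suffixProd {n : ℕ} (C : Fin n → List (Fin n) → List (Fin n) → ℝ) :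
    List (Fin n) → ℝ
  | [] => 1
  | (a :: t) => C a t (a :: t) * suffixProd C t

lemma ncStar_mul {n : ℕ} (A B : FreeAlgebra ℝ (Fin n)) :
    ncStar (A * B) = ncStar B * ncStar A := by
  simp [ncStar, map_mul]

lemma ncStar_add {n : ℕ} (A B : FreeAlgebra ℝ (Fin n)) :
    ncStar (A + B) = ncStar A + ncStar B := by
  simp [ncStar, map_add]

lemma ncStar_smul {n : ℕ} (c : ℝ) (A : FreeAlgebra ℝ (Fin n)) :
    ncStar (c • A) = c • ncStar A := by
  simp [ncStar, map_smul]

lemma ncStar_one {n : ℕ} : ncStar (1 : FreeAlgebra ℝ (Fin n)) = 1 := by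
  simp [ncStar]

lemma ncStar_iota {n : ℕ} (i : Fin n) : ncStar (FreeAlgebra.ι ℝ i) = FreeAlgebra.ι ℝ i := by
  simp [ncStar]

lemma ncStar_sum {n : ℕ} {ι : Type*} (s : Finset ι) (f : ι → FreeAlgebra ℝ (Fin n)) :
    ncStar (∑ i ∈ s, f i) = ∑ i ∈ s, ncStar (f i) := by
  simp [ncStar, map_sum]

/-- for a faithful state `φ` with orthogonal monic family `{P_u}` satisfying the
Favard recursion with `C_{i,v,u} = δ_{u,(i,v)} C_{i,v,(i,v)}`, the squared norm is
`V_{uu} = φ(P_u* P_u) = ∏_{j=1}^{k} C_{u(j), u_{j+1}, u_j}`. -/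
theorem squared_norm_eq_suffix_product (n : ℕ)
    (P : List (Fin n) → FreeAlgebra ℝ (Fin n)) (hP : IsMonicFamily P)
    (φ : FreeAlgebra ℝ (Fin n) →ₗ[ℝ] ℝ) (hφ1 : φ 1 = 1)
    (hφpos : ∀ A : FreeAlgebra ℝ (Fin n), 0 ≤ φ (ncStar A * A))
    (hφfaith : ∀ A : FreeAlgebra ℝ (Fin n), φ (ncStar A * A) = 0 → A = 0)
    (horth : ∀ u v : List (Fin n), u ≠ v → φ (ncStar (P u) * P v) = 0)
    (B C : Fin n → List (Fin n) → List (Fin n) → ℝ)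
    (hC : ∀ (i : Fin n) (v u : List (Fin n)), u ≠ i :: v → C i v u = 0)
    (hrec : ∀ (i : Fin n) (u : List (Fin n)),
      FreeAlgebra.ι ℝ i * P u
        = P (i :: u)
          + (∑ w : List.Vector (Fin n) u.length, B i w.toList u • P w.toList)
          + (∑ v : List.Vector (Fin n) (u.length - 1), C i v.toList u • P v.toList)) :
    ∀ u : List (Fin n), φ (ncStar (P u) * P u) = suffixProd C u := by
  intro u
  induction u with
  | nil => simp [hP.1, ncStar_one, suffixProd, hφ1]
  | cons a t ih =>
    have h1 : φ (ncStar (P (a::t)) * P (a::t))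
        = φ (ncStar (P (a::t)) * (FreeAlgebra.ι ℝ a * P t)) := by
      rw [hrec a t, mul_add, mul_add, map_add, map_add, Finset.mul_sum, Finset.mul_sum,
        map_sum, map_sum]
      have hw : ∀ w : List.Vector (Fin n) t.length,
          φ (ncStar (P (a::t)) * (B a w.toList t • P w.toList)) = 0 := by
        intro w
        rw [mul_smul_comm, map_smul, horth _ _ (by
          intro h
          have := congrArg List.length h
          simp [w.toList_length] at this), smul_zero]
      have hv : ∀ v : List.Vector (Fin n) (t.length - 1),
          φ (ncStar (P (a::t)) * (C a v.toList t • P v.toList)) = 0 := by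
        intro v
        rw [mul_smul_comm, map_smul, horth _ _ (by
          intro h
          have := congrArg List.length h
          simp [v.toList_length] at this
          omega), smul_zero]
      rw [Finset.sum_eq_zero (fun w _ => hw w), Finset.sum_eq_zero (fun v _ => hv v),
        add_zero, add_zero]
    have h2 : ncStar (P (a::t)) * (FreeAlgebra.ι ℝ a * P t)
        = ncStar (FreeAlgebra.ι ℝ a * P (a::t)) * P t := by
      rw [ncStar_mul, ncStar_iota, mul_assoc]
    rw [h1, h2, hrec a (a::t)]
    rw [ncStar_add, ncStar_add, add_mul, add_mul, map_add, map_add,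
      ncStar_sum, ncStar_sum, Finset.sum_mul, Finset.sum_mul, map_sum, map_sum]
    have hA : φ (ncStar (P (a::a::t)) * P t) = 0 := by
      apply horth
      intro h
      have := congrArg List.length h
      simp at this
      omega
    have hB : ∀ w : List.Vector (Fin n) (a::t).length,
        φ (ncStar (B a w.toList (a::t) • P w.toList) * P t) = 0 := by
      intro w
      rw [ncStar_smul, smul_mul_assoc, map_smul, horth _ _ (by
        intro h
        have := congrArg List.length h
        simp [w.toList_length] at this), smul_zero]
    have hCsum : ∑ v : List.Vector (Fin n) ((a::t).length - 1),
        φ (ncStar (C a v.toList (a::t) • P v.toList) * P t)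
        = C a t (a::t) * φ (ncStar (P t) * P t) := by
      let t0 : List.Vector (Fin n) ((a::t).length - 1) := ⟨t, by simp⟩
      have ht0 : t0.toList = t := rfl
      rw [Fintype.sum_eq_single t0
        (fun v hv => by
          have hvt : v.toList ≠ t := fun h =>
            hv (List.Vector.toList_injective (by rw [h, ht0]))
          rw [hC a v.toList (a::t) (fun h => hvt (by injection h with h1 h2; exact h2.symm)), zero_smul]
          simp [ncStar])]
      simp [ht0, ncStar_smul, smul_mul_assoc, smul_eq_mul]
    simp only [hA, hB, Finset.sum_const_zero, zero_add, add_zero] at *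
    rw [hCsum, ih]
    rfl
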